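/- arXiv:2409.08462 — 6 statements merged into one kernel-verified Lean document; each statement's English description precedes it below -/
import Mathlib

section
/- For all real numbers a, b, c the Cathelineau–Kontsevich symbol satisfies the 2-cocycle relation ⟨a,b⟩_H + ⟨a+b,c⟩_H = ⟨a,b+c⟩_H + ⟨b,c⟩_H. -/
/-- Extended binary entropy `H(p) = -p log p - (1-p) log (1-p)`. -/
noncomputable def binEntropy (p : ℝ) : ℝ :=
  Real.negMulLog p + Real.negMulLog (1 - p)

/-- The Cathelineau–Kontsevich symbol `⟨a,b⟩_H = (a+b) · H(a/(a+b))`. -/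
noncomputable def symbolH (a b : ℝ) : ℝ :=
  (a + b) * binEntropy (a / (a + b))

lemma symbolH_eq (a b : ℝ) :
    symbolH a b = -(a * Real.log a) - b * Real.log b + (a + b) * Real.log (a + b) := by
  unfold symbolH binEntropy Real.negMulLog
  rcases eq_or_ne (a + b) 0 with h | h
  · have hb : b = -a := by linarith
    subst hb
    simp [Real.log_neg_eq_log]
  · have h2 : 1 - a / (a + b) = b / (a + b) := by field_simp; ring
    rw [h2]
    have key : ∀ x : ℝ, (a + b) * (-(x / (a + b)) * Real.log (x / (a + b))) =
        -(x * Real.log x) + x * Real.log (a + b) := by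
      intro x
      rcases eq_or_ne x 0 with hx | hx
      · simp [hx]
      · rw [Real.log_div hx h]
        field_simp
        ring
    have := key a
    have := key b
    nlinarith [key a, key b]

theorem symbolH_cocycle (a b c : ℝ) :
    symbolH a b + symbolH (a + b) c = symbolH a (b + c) + symbolH b c := by
  simp only [symbolH_eq]
  ring_nf
end

section
/- The extended binary entropy H : ℝ → ℝ satisfies the four-term functional equation of entropy: for every real p with p ≠ 0 and p ≠ 1, and every real q, H(p) − H(q) + p·H(q/p) + (1−p)·H((1−q)/(1−p)) = 0. -/
theorem binEntropy_four_term (p q : ℝ) (hp0 : p ≠ 0) (hp1 : p ≠ 1) :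
    binEntropy p - binEntropy q + p * binEntropy (q / p)
      + (1 - p) * binEntropy ((1 - q) / (1 - p)) = 0 := by
  have hp1' : (1 : ℝ) - p ≠ 0 := sub_ne_zero.mpr fun h => hp1 h.symm
  have e1 : 1 - q / p = (p - q) / p := by field_simp
  have e2 : 1 - (1 - q) / (1 - p) = (q - p) / (1 - p) := by
    field_simp
    ring
  have h1 : p * (q / p * Real.log (q / p)) = q * Real.log q - q * Real.log p := by
    rcases eq_or_ne q 0 with h | h
    · simp [h]
    · rw [Real.log_div h hp0]; field_simp
  have h2 : p * ((p - q) / p * Real.log ((p - q) / p))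
      = (p - q) * Real.log (p - q) - (p - q) * Real.log p := by
    rcases eq_or_ne (p - q) 0 with h | h
    · simp [h]
    · rw [Real.log_div h hp0]; field_simp
  have h3 : (1 - p) * ((1 - q) / (1 - p) * Real.log ((1 - q) / (1 - p)))
      = (1 - q) * Real.log (1 - q) - (1 - q) * Real.log (1 - p) := by
    rcases eq_or_ne (1 - q) 0 with h | h
    · simp [h]
    · rw [Real.log_div h hp1']; field_simp
  have h4 : (1 - p) * ((q - p) / (1 - p) * Real.log ((q - p) / (1 - p)))
      = (q - p) * Real.log (p - q) - (q - p) * Real.log (1 - p) := by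
    rcases eq_or_ne (q - p) 0 with h | h
    · have h' : p - q = 0 := by linarith
      simp [h, h']
    · rw [Real.log_div h hp1']
      have : Real.log (q - p) = Real.log (p - q) := by
        rw [show q - p = -(p - q) by ring, Real.log_neg_eq_log]
      rw [this]; field_simp
  simp only [binEntropy, Real.negMulLog, e1, e2]
  linear_combination -h1 - h2 - h3 - h4
end

section
/- The extended binary entropy H : ℝ → ℝ satisfies the modified four-term equation: for every real p with p ≠ 0 and p ≠ 1, and every real q with q ≠ 1, H(p) − H(q) + p·H(q/p) − (1−q)·H((1−p)/(1−q)) = 0. -/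
theorem binEntropy_modified_four_term (p q : ℝ) (hp0 : p ≠ 0) (hp1 : p ≠ 1)
    (hq1 : q ≠ 1) :
    binEntropy p - binEntropy q + p * binEntropy (q / p)
      - (1 - q) * binEntropy ((1 - p) / (1 - q)) = 0 := by
  have h1p : (1 : ℝ) - p ≠ 0 := sub_ne_zero.2 (Ne.symm hp1)
  have h1q : (1 : ℝ) - q ≠ 0 := sub_ne_zero.2 (Ne.symm hq1)
  rcases eq_or_ne q 0 with rfl | hq0
  · simp [binEntropy, Real.negMulLog, div_self hp0]
    ring
  rcases eq_or_ne q p with rfl | hqp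
  · simp [binEntropy, div_self hp0, div_self h1q, Real.negMulLog]
  have hpq : p - q ≠ 0 := sub_ne_zero.2 (Ne.symm hqp)
  have e1 : 1 - q / p = (p - q) / p := by field_simp
  have e2 : 1 - (1 - p) / (1 - q) = (p - q) / (1 - q) := by
    field_simp
    ring
  simp only [binEntropy, Real.negMulLog, e1, e2]
  rw [Real.log_div hq0 hp0, Real.log_div hpq hp0, Real.log_div h1p h1q,
    Real.log_div hpq h1q]
  field_simp
  ring
end

section
/- There is no function φ : ℝ → ℝ → ℝ such that for all real a₁, a₂ and all nonzero real c₁, c₂ one has ⟨a₁, c₁·a₂⟩_H = φ(a₁,c₁) + φ(a₂,c₂) − φ(a₁ + c₁·a₂, c₁·c₂). (In other words, the entropy 2-cocycle on the affine group Aff₁(ℝ), which is a coboundary when restricted to the additive subgroup ℝ, admits no such trivialization on all of Aff₁(ℝ).) -/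
lemma binEntropy_zero' : binEntropy 0 = 0 := by
  simp [binEntropy, Real.negMulLog]

lemma binEntropy_one' : binEntropy 1 = 0 := by
  simp [binEntropy, Real.negMulLog]

lemma symbolH_zero_left (b : ℝ) : symbolH 0 b = 0 := by
  simp [symbolH, binEntropy_zero']

lemma symbolH_zero_right (a : ℝ) : symbolH a 0 = 0 := by
  rcases eq_or_ne a 0 with rfl | ha
  · simp [symbolH, binEntropy_zero']
  · simp [symbolH, div_self ha, binEntropy_one']

/-- The entropy 2-cocycle on the affine group `Aff₁(ℝ)` is not a coboundary. -/
theorem symbolH_affine_not_coboundary :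
    ¬ ∃ φ : ℝ → ℝ → ℝ, ∀ (a₁ a₂ c₁ c₂ : ℝ), c₁ ≠ 0 → c₂ ≠ 0 →
      symbolH a₁ (c₁ * a₂) =
        φ a₁ c₁ + φ a₂ c₂ - φ (a₁ + c₁ * a₂) (c₁ * c₂) := by
  rintro ⟨φ, h⟩
  -- A : φ (c*a) c = φ 0 c + φ a 1
  have hA : ∀ (a c : ℝ), c ≠ 0 → φ (c * a) c = φ 0 c + φ a 1 := by
    intro a c hc
    have := h 0 a c 1 hc one_ne_zero
    rw [symbolH_zero_left] at this
    simp only [zero_add, mul_one] at this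
    linarith
  -- B : φ a (c₁*c₂) = φ a c₁ + φ 0 c₂
  have hB : ∀ (a c₁ c₂ : ℝ), c₁ ≠ 0 → c₂ ≠ 0 → φ a (c₁ * c₂) = φ a c₁ + φ 0 c₂ := by
    intro a c₁ c₂ h1 h2
    have := h a 0 c₁ c₂ h1 h2
    rw [mul_zero, symbolH_zero_right] at this
    simp only [add_zero] at this
    linarith
  -- φ 0 1 = 0
  have hz : φ 0 1 = 0 := by
    have := hA 1 1 one_ne_zero
    simp only [one_mul] at this
    linarith
  -- inverse relation
  have hinv : ∀ c : ℝ, c ≠ 0 → φ 0 c + φ 0 c⁻¹ = 0 := by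
    intro c hc
    have := hB 0 c c⁻¹ hc (inv_ne_zero hc)
    rw [mul_inv_cancel₀ hc, hz] at this
    linarith
  -- scaling invariance : φ (c*a) 1 = φ a 1
  have hScale : ∀ (a c : ℝ), c ≠ 0 → φ (c * a) 1 = φ a 1 := by
    intro a c hc
    have h1 : φ (c * a) 1 = φ (c * a) c + φ 0 c⁻¹ := by
      have := hB (c * a) c c⁻¹ hc (inv_ne_zero hc)
      rwa [mul_inv_cancel₀ hc] at this
    rw [h1, hA a c hc]
    have := hinv c hc
    linarith
  -- symbolH 1 1 = φ 1 1
  have k1 : symbolH 1 1 = φ 1 1 := by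
    have := h 1 1 1 1 one_ne_zero one_ne_zero
    have h2 : φ (1 + 1 * 1 : ℝ) (1 * 1) = φ 1 1 := by
      norm_num
      have := hScale 1 2 two_ne_zero
      simpa using this
    rw [h2] at this
    simpa using this
  -- symbolH 1 2 = φ 1 1
  have k2 : symbolH 1 2 = φ 1 1 := by
    have := h 1 2 1 1 one_ne_zero one_ne_zero
    have h2 : φ (1 + 1 * 2 : ℝ) (1 * 1) = φ 1 1 := by
      norm_num
      have := hScale 1 3 three_ne_zero
      simpa using this
    have h3 : φ (2 : ℝ) 1 = φ 1 1 := by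
      have := hScale 1 2 two_ne_zero
      simpa using this
    rw [h2] at this
    simp only [one_mul] at this
    rw [h3] at this
    linarith
  -- compute the two symbol values
  have v1 : symbolH 1 1 = 2 * Real.log 2 := by
    have : ((1:ℝ) / (1 + 1)) = 1/2 := by norm_num
    rw [symbolH, this]
    have : binEntropy (1/2) = Real.log 2 := by
      rw [binEntropy]
      norm_num [Real.negMulLog, Real.log_div, Real.log_inv, one_div]
      ring
    rw [this]; ring
  have v2 : symbolH 1 2 = 3 * Real.log 3 - 2 * Real.log 2 := by
    have e : ((1:ℝ) / (1 + 2)) = 1/3 := by norm_num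
    rw [symbolH, e]
    have e2 : (1 : ℝ) - 1/3 = 2/3 := by norm_num
    rw [binEntropy, e2]
    rw [Real.negMulLog, Real.negMulLog]
    rw [show ((1:ℝ)/3) = (3:ℝ)⁻¹ by norm_num, Real.log_inv]
    rw [Real.log_div (by norm_num) (by norm_num)]
    ring
  have key : 4 * Real.log 2 = 3 * Real.log 3 := by
    rw [k1] at v1; rw [k2] at v2; linarith
  have hlog : Real.log 16 = Real.log 27 := by
    rw [show (16:ℝ) = 2^4 by norm_num, show (27:ℝ) = 3^3 by norm_num,
      Real.log_pow, Real.log_pow]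
    push_cast
    linarith
  have : (16:ℝ) = 27 := by
    have := congrArg Real.exp hlog
    rwa [Real.exp_log (by norm_num), Real.exp_log (by norm_num)] at this
  norm_num at this
end

section
/- Let d : ℝ → ℝ be a derivation of ℝ over ℤ (an additive map satisfying d(xy) = x·d(y) + y·d(x)), and define h : ℝ → ℝ by h(x) = (d x)²/(x·(1−x)) for x ≠ 0,1 and h(0) = h(1) = 0. Then h satisfies the two functional equations of entropy: h(1−p) = h(p) for all real p, and H(p) − H(q) + p·H(q/p) + (1−p)·H((1−q)/(1−p)) = 0 with H replaced by h, for every real p with p ≠ 0, p ≠ 1 and every real q. -/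
set_option maxHeartbeats 1000000

/-- The non-measurable "entropy" `h(x) = (dx)² / (x(1-x))` built from a derivation
`d` of `ℝ` over `ℤ` (with `h(0) = h(1) = 0` via the convention `x/0 = 0`). -/
noncomputable def derivEntropy (d : Derivation ℤ ℝ ℝ) (x : ℝ) : ℝ :=
  (d x) ^ 2 / (x * (1 - x))

theorem derivEntropy_functional_equations (d : Derivation ℤ ℝ ℝ) :
    (∀ p : ℝ, derivEntropy d (1 - p) = derivEntropy d p) ∧
    (∀ p q : ℝ, p ≠ 0 → p ≠ 1 →
      derivEntropy d p - derivEntropy d q + p * derivEntropy d (q / p)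
        + (1 - p) * derivEntropy d ((1 - q) / (1 - p)) = 0) := by
  have hd1 : d 1 = 0 := Derivation.map_one_eq_zero d
  have hsub : ∀ p : ℝ, d (1 - p) = -d p := by
    intro p; rw [map_sub, hd1]; ring
  constructor
  · intro p
    unfold derivEntropy
    rw [show (1:ℝ) - (1 - p) = p by ring, hsub]
    ring_nf
  · intro p q hp hp1
    have h1p : (1:ℝ) - p ≠ 0 := sub_ne_zero.mpr (Ne.symm hp1)
    have hp1' : p - 1 ≠ 0 := sub_ne_zero.mpr hp1
    unfold derivEntropy
    rw [Derivation.leibniz_div, Derivation.leibniz_div, hsub, hsub]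
    simp only [smul_eq_mul]
    rcases eq_or_ne q 0 with rfl | hq
    · simp only [map_zero]
      field_simp
      linear_combination (-(d p ^ 2 * p)) * mul_inv_cancel₀ hp
    rcases eq_or_ne q 1 with rfl | hq1
    · simp only [hd1]
      field_simp
      ring
    have h1q : (1:ℝ) - q ≠ 0 := sub_ne_zero.mpr (Ne.symm hq1)
    rcases eq_or_ne q p with rfl | hqp
    · field_simp
      simp
    have hpq : p - q ≠ 0 := sub_ne_zero.mpr (Ne.symm hqp)
    have hqp2 : q - p ≠ 0 := sub_ne_zero.mpr hqp
    have e1 : q / p * (1 - q / p) = q * (p - q) / p ^ 2 := by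
      field_simp
    have e2 : (1 - q) / (1 - p) * (1 - (1 - q) / (1 - p)) = (1 - q) * (q - p) / (1 - p) ^ 2 := by
      field_simp; ring
    rw [e1, e2]
    field_simp
    ring
end

section
/- Let K be a field and d : K → K a derivation of K over ℤ. Define ψ : K → K by ψ(a) = (d a)²/a for a ≠ 0 and ψ(0) = 0. Then for all a, b ∈ K with a ≠ 0, b ≠ 0 and a + b ≠ 0: ψ(a) + ψ(b) − ψ(a+b) = (b·d(a) − a·d(b))² / (a·b·(a+b)); moreover, for every c ∈ K (and a, b as above), ψ(c·a) + ψ(c·b) − ψ(c·(a+b)) = c·(ψ(a) + ψ(b) − ψ(a+b)), i.e., the symmetric 2-cocycle ⟨a,b⟩ := ψ(a) + ψ(b) − ψ(a+b) satisfies the scaling law ⟨ca,cb⟩ = c·⟨a,b⟩. -/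
/-- `ψ(a) = (da)²/a` for a derivation `d` of a field `K` over `ℤ`
(with `ψ(0) = 0` via the convention `x/0 = 0`). -/
noncomputable def psiDeriv {K : Type*} [Field K] (d : Derivation ℤ K K) (a : K) : K :=
  (d a) ^ 2 / a

lemma psiDeriv_aux {K : Type*} [Field K] (d : Derivation ℤ K K)
    (a b : K) (ha : a ≠ 0) (hb : b ≠ 0) (hab : a + b ≠ 0) :
    psiDeriv d a + psiDeriv d b - psiDeriv d (a + b) =
      (b * d a - a * d b) ^ 2 / (a * b * (a + b)) := by
  simp only [psiDeriv, map_add]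
  field_simp
  ring

theorem psiDeriv_bracket {K : Type*} [Field K] (d : Derivation ℤ K K)
    (a b : K) (ha : a ≠ 0) (hb : b ≠ 0) (hab : a + b ≠ 0) :
    psiDeriv d a + psiDeriv d b - psiDeriv d (a + b) =
      (b * d a - a * d b) ^ 2 / (a * b * (a + b)) ∧
    ∀ c : K,
      psiDeriv d (c * a) + psiDeriv d (c * b) - psiDeriv d (c * (a + b)) =
        c * (psiDeriv d a + psiDeriv d b - psiDeriv d (a + b)) := by
  have key := psiDeriv_aux d a b ha hb hab
  refine ⟨key, fun c => ?_⟩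
  rcases eq_or_ne c 0 with rfl | hc
  · simp [psiDeriv]
  · have key2 := psiDeriv_aux d (c * a) (c * b) (mul_ne_zero hc ha) (mul_ne_zero hc hb)
      (by rw [← mul_add]; exact mul_ne_zero hc hab)
    rw [← mul_add] at key2
    rw [key2, key]
    simp only [Derivation.leibniz, smul_eq_mul]
    field_simp
    ring
end
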